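/- Let q be a real number with q > 0 and q ≠ 1, let λ, λ' ∈ ℝ with λ+λ' ∉ ℤ, and let n ∈ ℕ. Define Ψ_n : ℂ[z] → ℂ[x,y] by Ψ_n(z^k) = ΔE^k(P_n^{λ,λ'}), and define the q-Rankin–Cohen bracket qRC_n : ℂ[x] × ℂ[y] → ℂ[z] by qRC_n(f,g)(z) = Σ_{k=0}^n [n choose k]_q (−1)^k q^{k(λ'+2n−k−1)} [λ+k]_{n−k}[λ'+n−k]_k (D_{q²}^k f)(z) · (D_{q²}^{n−k} g)(q^{λ+2k} z). Then qRC_n is the adjoint of the holographic operator Ψ_n with respect to the q-Fischer inner products: for all P ∈ ℂ[z] and all f ∈ ℂ[x], g ∈ ℂ[y], ⟨Ψ_n(P), f(x)g(y)⟩_{ℂ[x,y]} = ⟨P, qRC_n(f,g)⟩_{ℂ[z]}. -/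

import Mathlib

noncomputable section

open Finset

/-- The q-number [x] = (q^x − q^{−x})/(q − q⁻¹) for real q > 0 and x ∈ ℝ. -/
def qnumR (q x : ℝ) : ℝ := (q ^ x - q ^ (-x)) / (q - q⁻¹)

/-- [x]_n = ∏_{s=0}^{n−1}[x+s]. -/
def qpochR (q x : ℝ) (n : ℕ) : ℝ := ∏ s ∈ Finset.range n, qnumR q (x + s)

/-- [n]! = [1]_n. -/
def qfactR (q : ℝ) (n : ℕ) : ℝ := ∏ s ∈ Finset.range n, qnumR q ((s : ℝ) + 1)

/-- [n choose k] = [n]!/([k]![n−k]!). -/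
def qbinomR (q : ℝ) (n k : ℕ) : ℝ := qfactR q n / (qfactR q k * qfactR q (n - k))

/-- ℂ[z] with basis the monomials z^m (with its convolution product). -/
abbrev P1 : Type := AddMonoidAlgebra ℂ ℕ

/-- ℂ[x] ⊗ ℂ[y] with basis the monomials x^k y^l. -/
abbrev P2 : Type := (ℕ × ℕ) →₀ ℂ

def mono (k l : ℕ) : P2 := Finsupp.single (k, l) 1

/-- q-Fischer inner product on ℂ[z]: ⟨z^n, z^m⟩ = δ_{n,m} q^{n(n−1)/2}[n]!. -/
def ip1 (q : ℝ) (P Q : P1) : ℂ :=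
  Finsupp.sum P.coeff fun m c =>
    c * (starRingEnd ℂ) (Q.coeff m) * ((q : ℂ) ^ (m * (m - 1) / 2) * (qfactR q m : ℂ))

/-- q-Fischer inner product on ℂ[x]⊗ℂ[y]:
⟨x^a y^b, x^c y^d⟩ = δ_{a,c} δ_{b,d} q^{a(a−1)/2+b(b−1)/2}[a]![b]!. -/
def ip2 (q : ℝ) (P Q : P2) : ℂ :=
  Finsupp.sum P fun ab c =>
    c * (starRingEnd ℂ) (Q ab) *
      ((q : ℂ) ^ (ab.1 * (ab.1 - 1) / 2 + ab.2 * (ab.2 - 1) / 2)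
        * (qfactR q ab.1 : ℂ) * (qfactR q ab.2 : ℂ))

/-- The element f(x)g(y) of ℂ[x]⊗ℂ[y]. -/
def fg (f g : P1) : P2 :=
  Finsupp.sum f.coeff fun a ca => Finsupp.sum g.coeff fun b cb => Finsupp.single (a, b) (ca * cb)

/-- The q-derivative D_{q²}, with D_{q²} z^m = q^{m−1}[m] z^{m−1}. -/
def Dq (q : ℝ) : P1 →ₗ[ℂ] P1 :=
  (Finsupp.lsum ℂ fun (m : ℕ) => LinearMap.toSpanSingleton ℂ P1
    (((q ^ (m - 1) * qnumR q m : ℝ) : ℂ) • (AddMonoidAlgebra.single (m - 1) 1 : P1))) ∘ₗ (AddMonoidAlgebra.coeffLinearEquiv ℂ).toLinearMap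

/-- The scaling operator h(z) ↦ h(c·z). -/
def scP (c : ℂ) : P1 →ₗ[ℂ] P1 :=
  (Finsupp.lsum ℂ fun (m : ℕ) => LinearMap.toSpanSingleton ℂ P1
    ((c ^ m) • (AddMonoidAlgebra.single m 1 : P1))) ∘ₗ (AddMonoidAlgebra.coeffLinearEquiv ℂ).toLinearMap
/-- ΔE(x^k y^l) = x^{k+1} y^l + q^{λ+2k} x^k y^{l+1}. -/
def ΔE (q lam : ℝ) : P2 →ₗ[ℂ] P2 :=
  Finsupp.lsum ℂ fun kl => LinearMap.toSpanSingleton ℂ P2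
    (mono (kl.1 + 1) kl.2
      + (((q ^ (lam + 2 * (kl.1 : ℝ)) : ℝ) : ℂ)) • mono kl.1 (kl.2 + 1))

/-- The lowest-weight vector P_n^{λ,λ'} ∈ ℂ[x,y]. -/
def Pvec (q lam lam' : ℝ) (n : ℕ) : P2 :=
  ∑ k ∈ Finset.range (n + 1),
    (((qbinomR q n k * (-1) ^ k * q ^ ((k : ℝ) * (lam' + 2 * (n : ℝ) - (k : ℝ) - 1))
      * qpochR q (lam + (k : ℝ)) (n - k) * qpochR q (lam' + ((n - k : ℕ) : ℝ)) k : ℝ)) : ℂ)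
      • mono k (n - k)

/-- The holographic operator Ψ_n : ℂ[z] → ℂ[x,y], z^k ↦ ΔE^k(P_n^{λ,λ'}). -/
def Psi (q lam lam' : ℝ) (n : ℕ) : P1 →ₗ[ℂ] P2 :=
  (Finsupp.lsum ℂ fun (k : ℕ) => LinearMap.toSpanSingleton ℂ P2
    (((ΔE q lam) ^ k) (Pvec q lam lam' n))) ∘ₗ (AddMonoidAlgebra.coeffLinearEquiv ℂ).toLinearMap

/-- The q-Rankin–Cohen bracket
qRC_n(f,g)(z) = Σ_{k=0}^n [n choose k] (−1)^k q^{k(λ'+2n−k−1)} [λ+k]_{n−k}[λ'+n−k]_k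
(D_{q²}^k f)(z)·(D_{q²}^{n−k} g)(q^{λ+2k} z). -/
def qRC (q lam lam' : ℝ) (n : ℕ) (f g : P1) : P1 :=
  ∑ k ∈ Finset.range (n + 1),
    (((qbinomR q n k * (-1) ^ k * q ^ ((k : ℝ) * (lam' + 2 * (n : ℝ) - (k : ℝ) - 1))
      * qpochR q (lam + (k : ℝ)) (n - k) * qpochR q (lam' + ((n - k : ℕ) : ℝ)) k : ℝ)) : ℂ)
      • ((((Dq q) ^ k) f) * scP (((q ^ (lam + 2 * (k : ℝ)) : ℝ) : ℂ)) (((Dq q) ^ (n - k)) g))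

/-! Multiplication by `z` is adjoint to `D_{q²}` for the q-Fischer product on `ℂ[z]`, and `ΔE` is
adjoint to `f(x)g(y) ↦ (D_{q²}f)(x)g(y) + q^λ f(q²x)(D_{q²}g)(y)` on product vectors.
Since `D_{q²}(uv) = (D_{q²}u)v + u(q²·)D_{q²}v`, the bracket `qRC_n` satisfies the matching Leibniz
rule, so both sides of the identity for `P = z^m` obey the same recursion in `m`. At `m = 0` both are
the conjugate constant term of `qRC_n(f,g)`, because the constant term of `D_{q²}^k f` is
`q^{k(k-1)/2}[k]!` times the `k`-th coefficient of `f`. -/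

namespace QRC

open Finset ComplexConjugate AddMonoidAlgebra

variable {q lam lam' : ℝ}

def qderivCoeff (q : ℝ) (m : ℕ) : ℝ := q ^ (m - 1) * qnumR q m

lemma qderivCoeff_zero : qderivCoeff q 0 = 0 := by
  simp [qderivCoeff, qnumR]

lemma sq_sub_one_ne_zero (hq : 0 < q) (hq1 : q ≠ 1) : q ^ 2 - 1 ≠ 0 :=
  sub_ne_zero.mpr fun h => hq1 ((pow_eq_one_iff_of_nonneg hq.le two_ne_zero).mp h)

lemma qderivCoeff_eq (hq : 0 < q) (hq1 : q ≠ 1) (m : ℕ) :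
    qderivCoeff q m = ((q ^ 2) ^ m - 1) / (q ^ 2 - 1) := by
  rcases m with _ | m
  · simp [qderivCoeff_zero]
  have hq2 := sq_sub_one_ne_zero hq hq1
  have hqinv : q - q⁻¹ ≠ 0 := by
    rw [show q - q⁻¹ = (q ^ 2 - 1) / q by field_simp]
    exact div_ne_zero hq2 hq.ne'
  rw [qderivCoeff, qnumR, Real.rpow_neg hq.le, Real.rpow_natCast, Nat.add_sub_cancel]
  field_simp
  ring

lemma qderivCoeff_add (hq : 0 < q) (hq1 : q ≠ 1) (a b : ℕ) :
    qderivCoeff q (a + b) = qderivCoeff q a + (q ^ 2) ^ a * qderivCoeff q b := by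
  have hq2 := sq_sub_one_ne_zero hq hq1
  simp only [qderivCoeff_eq hq hq1]
  field_simp
  ring

def fischerWeight (q : ℝ) (m : ℕ) : ℝ := q ^ (m * (m - 1) / 2) * qfactR q m

lemma fischerWeight_zero : fischerWeight q 0 = 1 := by
  simp [fischerWeight, qfactR]

lemma fischerWeight_succ (m : ℕ) :
    fischerWeight q (m + 1) = qderivCoeff q (m + 1) * fischerWeight q m := by
  rw [fischerWeight, fischerWeight, Nat.triangle_succ, pow_add, qfactR, prod_range_succ,
    qderivCoeff, Nat.add_sub_cancel, qfactR]
  push_cast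
  ring

lemma ip1_eq_linearCombination (P Q : P1) :
    ip1 q P Q = Finsupp.linearCombination ℂ
      (fun m => conj (Q.coeff m) * (fischerWeight q m : ℂ)) P.coeff := by
  simp [ip1, fischerWeight, Finsupp.linearCombination_apply, mul_assoc]

lemma ip2_eq_linearCombination (u v : P2) :
    ip2 q u v = Finsupp.linearCombination ℂ
      (fun ab => conj (v ab) * ((fischerWeight q ab.1 * fischerWeight q ab.2 : ℝ) : ℂ)) u := by
  simp only [ip2, fischerWeight, Finsupp.linearCombination_apply, smul_eq_mul]
  refine Finsupp.sum_congr fun ab _ => ?_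
  push_cast
  ring

lemma Dq_single (a : ℕ) (c : ℂ) :
    Dq q (single a c) = single (a - 1) (qderivCoeff q a * c) := by
  simp [Dq, qderivCoeff, smul_single, mul_comm]

lemma Dq_coeff (h : P1) (m : ℕ) :
    (Dq q h).coeff m = qderivCoeff q (m + 1) * h.coeff (m + 1) := by
  induction h using AddMonoidAlgebra.induction_linear with
  | zero => simp
  | add u v hu hv => simp [hu, hv, mul_add]
  | single a c =>
    rcases a with _ | a
    · simp [Dq_single, qderivCoeff_zero]
    · simp [Dq_single, Finsupp.single_apply]
      grind

lemma Dq_pow_coeff_zero (k : ℕ) (h : P1) :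
    ((Dq q ^ k) h).coeff 0 = fischerWeight q k * h.coeff k := by
  induction k generalizing h with
  | zero => simp [fischerWeight_zero]
  | succ k ih =>
    rw [pow_succ, Module.End.mul_apply, ih, Dq_coeff, fischerWeight_succ]
    push_cast
    ring

lemma scP_single (c : ℂ) (a : ℕ) (x : ℂ) : scP c (single a x) = single a (c ^ a * x) := by
  simp [scP, smul_single, mul_comm]

lemma scP_coeff (c : ℂ) (h : P1) (m : ℕ) : (scP c h).coeff m = c ^ m * h.coeff m := by
  induction h using AddMonoidAlgebra.induction_linear with
  | zero => simp
  | add u v hu hv => simp [hu, hv, mul_add]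
  | single a x =>
    simp only [scP_single, coeff_single, Finsupp.single_apply]
    split_ifs with h <;> simp [h]

lemma Dq_scP (c : ℂ) (h : P1) : Dq q (scP c h) = c • scP c (Dq q h) := by
  ext m
  simp only [Dq_coeff, scP_coeff, coeff_smul, Finsupp.smul_apply, smul_eq_mul]
  ring

lemma Dq_pow_scP (c : ℂ) (k : ℕ) (h : P1) :
    (Dq q ^ k) (scP c h) = c ^ k • scP c ((Dq q ^ k) h) := by
  induction k with
  | zero => simp
  | succ k ih =>
    rw [pow_succ', Module.End.mul_apply, ih, map_smul, Dq_scP, smul_smul, ← pow_succ,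
      Module.End.mul_apply]

lemma Dq_single_mul_single (hq : 0 < q) (hq1 : q ≠ 1) (a b : ℕ) (x y : ℂ) :
    Dq q (single a x * single b y)
      = Dq q (single a x) * single b y + scP ((q : ℂ) ^ 2) (single a x) * Dq q (single b y) := by
  simp only [single_mul_single, Dq_single, scP_single]
  rcases a with _ | a
  · simp only [qderivCoeff_zero, Complex.ofReal_zero, zero_mul, single_zero, zero_add, pow_zero,
      one_mul]
    congr 1
    ring
  rcases b with _ | b
  · simp [qderivCoeff_zero, mul_assoc]
  rw [show a + 1 - 1 + (b + 1) = a + 1 + (b + 1) - 1 by omega,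
    show a + 1 + (b + 1 - 1) = a + 1 + (b + 1) - 1 by omega, ← single_add,
    qderivCoeff_add hq hq1]
  push_cast
  congr 1
  ring

lemma Dq_mul (hq : 0 < q) (hq1 : q ≠ 1) (u v : P1) :
    Dq q (u * v) = Dq q u * v + scP ((q : ℂ) ^ 2) u * Dq q v := by
  induction u using AddMonoidAlgebra.induction_linear with
  | zero => simp
  | add u u' hu hu' => simp only [add_mul, map_add, hu, hu']; abel
  | single a x =>
    induction v using AddMonoidAlgebra.induction_linear with
    | zero => simp
    | add v v' hv hv' => simp only [mul_add, map_add, hv, hv']; abel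
    | single b y => exact Dq_single_mul_single hq hq1 a b x y

lemma coeff_mul_zero (u v : P1) : (u * v).coeff 0 = u.coeff 0 * v.coeff 0 := by
  rw [coeff_mul_antidiag u v 0 {(0, 0)} (by simp [Prod.ext_iff]), sum_singleton]

lemma fg_apply (f g : P1) (a b : ℕ) : fg f g (a, b) = f.coeff a * g.coeff b := by
  have hsplit : ∀ (a' b' : ℕ) (x y : ℂ), Finsupp.single (a', b') (x * y) (a, b)
      = (if a' = a then x else 0) * (if b' = b then y else 0) := by
    intro a' b' x y
    simp only [Finsupp.single_apply, Prod.mk.injEq]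
    split_ifs <;> simp_all
  simp only [fg, Finsupp.sum_apply, hsplit, ← Finsupp.mul_sum, ← Finsupp.sum_mul,
    Finsupp.sum_ite_self_eq']

lemma ΔE_single (k l : ℕ) (c : ℂ) :
    ΔE q lam (Finsupp.single (k, l) c)
      = Finsupp.single (k + 1, l) c
        + Finsupp.single (k, l + 1) ((q ^ (lam + 2 * (k : ℝ)) : ℝ) * c) := by
  simp [ΔE, mono, Finsupp.smul_single, mul_comm]

lemma ofReal_rpow_add_two_mul (hq : 0 < q) (k : ℕ) :
    ((q ^ (lam + 2 * (k : ℝ)) : ℝ) : ℂ) = ((q ^ lam : ℝ) : ℂ) * ((q : ℂ) ^ 2) ^ k := by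
  rw [Real.rpow_add hq, mul_comm 2, Real.rpow_mul hq.le, Real.rpow_natCast, Real.rpow_two]
  push_cast
  ring

lemma ip2_ΔE_fg (hq : 0 < q) (u : P2) (f g : P1) :
    ip2 q (ΔE q lam u) (fg f g)
      = ip2 q u (fg (Dq q f) g)
        + (q ^ lam : ℝ) * ip2 q u (fg (scP ((q : ℂ) ^ 2) f) (Dq q g)) := by
  simp only [ip2_eq_linearCombination]
  induction u using Finsupp.induction_linear with
  | zero => simp
  | add u v hu hv => simp only [map_add, hu, hv]; ring
  | single kl c =>
    obtain ⟨k, l⟩ := kl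
    simp only [ΔE_single, map_add, Finsupp.linearCombination_single, fg_apply, Dq_coeff,
      scP_coeff, fischerWeight_succ, ofReal_rpow_add_two_mul hq, smul_eq_mul, map_mul, map_pow,
      Complex.conj_ofReal]
    push_cast
    ring

lemma Dq_qRC (hq : 0 < q) (hq1 : q ≠ 1) (n : ℕ) (f g : P1) :
    Dq q (qRC q lam lam' n f g)
      = qRC q lam lam' n (Dq q f) g
        + ((q ^ lam : ℝ) : ℂ) • qRC q lam lam' n (scP ((q : ℂ) ^ 2) f) (Dq q g) := by
  simp only [qRC, map_sum, map_smul, smul_sum, ← sum_add_distrib]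
  refine sum_congr rfl fun k _ => ?_
  have hcomm : ∀ j (h : P1), Dq q ((Dq q ^ j) h) = (Dq q ^ j) (Dq q h) := fun j =>
    LinearMap.congr_fun (Commute.self_pow (Dq q) j).eq
  rw [Dq_mul hq hq1, Dq_scP, hcomm, hcomm, Dq_pow_scP, ofReal_rpow_add_two_mul hq,
    smul_mul_assoc, mul_smul_comm, smul_add, smul_smul, smul_smul, smul_smul]
  congr 2
  ring

lemma ip2_Pvec_fg (n : ℕ) (f g : P1) :
    ip2 q (Pvec q lam lam' n) (fg f g) = conj ((qRC q lam lam' n f g).coeff 0) := by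
  simp only [ip2_eq_linearCombination, Pvec, qRC, mono, map_sum, map_smul,
    Finsupp.linearCombination_single, coeff_sum, Finsupp.finsetSum_apply, coeff_smul,
    Finsupp.smul_apply, coeff_mul_zero, scP_coeff, Dq_pow_coeff_zero, fg_apply, smul_eq_mul,
    map_mul, map_one, Complex.conj_ofReal, pow_zero]
  refine sum_congr rfl fun k _ => ?_
  push_cast
  ring

lemma ip2_ΔE_pow_Pvec_fg (hq : 0 < q) (hq1 : q ≠ 1) (n m : ℕ) (f g : P1) :
    ip2 q ((ΔE q lam ^ m) (Pvec q lam lam' n)) (fg f g)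
      = conj ((qRC q lam lam' n f g).coeff m) * fischerWeight q m := by
  induction m generalizing f g with
  | zero => simp [ip2_Pvec_fg, fischerWeight_zero]
  | succ m ih =>
    have hshift : conj ((qRC q lam lam' n f g).coeff (m + 1)) * fischerWeight q (m + 1)
        = conj ((Dq q (qRC q lam lam' n f g)).coeff m) * fischerWeight q m := by
      rw [Dq_coeff, fischerWeight_succ, map_mul, Complex.conj_ofReal]
      push_cast
      ring
    rw [hshift, Dq_qRC hq hq1, pow_succ', Module.End.mul_apply, ip2_ΔE_fg hq, ih, ih]
    simp only [coeff_add, coeff_smul, Finsupp.add_apply, Finsupp.smul_apply, smul_eq_mul, map_add,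
      map_mul, Complex.conj_ofReal]
    ring

end QRC

theorem qRC_adjoint_of_Psi_general (q : ℝ) (hq : 0 < q) (hq1 : q ≠ 1)
    (lam lam' : ℝ) (n : ℕ)
    (P f g : P1) :
    ip2 q (Psi q lam lam' n P) (fg f g) = ip1 q P (qRC q lam lam' n f g) := by
  have hPsi : Psi q lam lam' n P
      = P.coeff.sum fun k c => c • (ΔE q lam ^ k) (Pvec q lam lam' n) := rfl
  rw [hPsi, QRC.ip1_eq_linearCombination, Finsupp.linearCombination_apply,
    QRC.ip2_eq_linearCombination, map_finsuppSum]
  refine Finsupp.sum_congr fun k _ => ?_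
  rw [map_smul, ← QRC.ip2_eq_linearCombination, QRC.ip2_ΔE_pow_Pvec_fg hq hq1]

/-- **The q-Rankin–Cohen bracket is the adjoint of the holographic operator**
(Theorem 5.1): for all P ∈ ℂ[z], f ∈ ℂ[x], g ∈ ℂ[y],
⟨Ψ_n(P), f(x)g(y)⟩ = ⟨P, qRC_n(f,g)⟩ for the q-Fischer inner products. -/
theorem qRC_adjoint_of_Psi (q : ℝ) (hq : 0 < q) (hq1 : q ≠ 1)
    (lam lam' : ℝ) (hll : ∀ m : ℤ, lam + lam' ≠ (m : ℝ)) (n : ℕ)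
    (P f g : P1) :
    ip2 q (Psi q lam lam' n P) (fg f g) = ip1 q P (qRC q lam lam' n f g) :=
  qRC_adjoint_of_Psi_general q hq hq1 lam lam' n P f g
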